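/- For positive constants ε, γ, D, k with ζ := γ²D − k > 0, the limit as t → ∞ of exp(ζ t) · erfc(ε/√t + γ√(D t)) equals 0, where erfc(x) = (2/√π) ∫_x^∞ exp(−u²) du. -/

import Mathlib

open Real Filter Set Topology
noncomputable def erfc (x : ℝ) : ℝ := (2 / Real.sqrt Real.pi) * ∫ u in Set.Ioi x, Real.exp (-u^2)

open MeasureTheory in
lemma erfc_nonneg (x : ℝ) : 0 ≤ erfc x := by
  apply mul_nonneg (by positivity)
  exact setIntegral_nonneg measurableSet_Ioi (fun u _ => (Real.exp_pos _).le)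

open MeasureTheory in
lemma integral_translate (x : ℝ) :
    ∫ u in Set.Ioi x, Real.exp (-(u - x)^2) = ∫ v in Set.Ioi (0:ℝ), Real.exp (-v^2) := by
  have h := (measurePreserving_add_right volume x).setIntegral_preimage_emb
    (measurableEmbedding_addRight x) (fun u => Real.exp (-(u - x)^2)) (Set.Ioi x)
  simp only [add_sub_cancel_right] at h
  rw [← h]
  congr 1
  ext y
  simp [Set.mem_preimage, lt_add_iff_pos_left]

open MeasureTheory in
lemma erfc_le_exp {x : ℝ} (hx : 0 ≤ x) : erfc x ≤ Real.exp (-x^2) := by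
  have hint : Integrable (fun u : ℝ => Real.exp (-u^2)) := by
    simpa using integrable_exp_neg_mul_sq (one_pos)
  have hint2 : Integrable (fun u : ℝ => Real.exp (-x^2) * Real.exp (-(u - x)^2)) := by
    exact (hint.comp_sub_right x).const_mul _
  have hle : ∫ u in Set.Ioi x, Real.exp (-u^2)
      ≤ ∫ u in Set.Ioi x, Real.exp (-x^2) * Real.exp (-(u - x)^2) := by
    apply setIntegral_mono_on hint.integrableOn hint2.integrableOn measurableSet_Ioi
    intro u hu
    rw [← Real.exp_add]
    apply Real.exp_le_exp.2
    nlinarith [Set.mem_Ioi.1 hu]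
  have hval : ∫ u in Set.Ioi x, Real.exp (-x^2) * Real.exp (-(u - x)^2)
      = Real.exp (-x^2) * (Real.sqrt Real.pi / 2) := by
    rw [integral_const_mul, integral_translate x]
    congr 1
    have := integral_gaussian_Ioi 1
    simpa using this
  have hpi : (0:ℝ) < Real.sqrt Real.pi := Real.sqrt_pos.2 Real.pi_pos
  unfold erfc
  calc (2 / Real.sqrt Real.pi) * ∫ u in Set.Ioi x, Real.exp (-u^2)
      ≤ (2 / Real.sqrt Real.pi) * (Real.exp (-x^2) * (Real.sqrt Real.pi / 2)) := by
        apply mul_le_mul_of_nonneg_left _ (by positivity)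
        rw [← hval]; exact hle
    _ = Real.exp (-x^2) := by field_simp

theorem stmt0 (ε γ D k : ℝ) (hε : 0 < ε) (hγ : 0 < γ) (hD : 0 < D) (hk : 0 < k)
    (hζ : 0 < γ ^ 2 * D - k) :
    Tendsto (fun t : ℝ => Real.exp ((γ ^ 2 * D - k) * t) *
      erfc (ε / Real.sqrt t + γ * Real.sqrt (D * t))) atTop (nhds 0) := by
  have hg : Tendsto (fun t : ℝ => Real.exp (-(k * t))) atTop (nhds 0) := by
    apply Real.tendsto_exp_atBot.comp
    exact (tendsto_neg_atBot_iff.2 (tendsto_atTop_atTop_of_monotone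
      (fun a b hab => by nlinarith) (fun b => ⟨b / k + 1, by nlinarith [div_mul_cancel₀ b hk.ne']⟩)))
  apply squeeze_zero' (g := fun t => Real.exp (-(k * t))) ?_ ?_ hg
  · filter_upwards with t
    exact mul_nonneg (Real.exp_pos _).le (erfc_nonneg _)
  · filter_upwards [eventually_gt_atTop 0] with t ht
    set x := ε / Real.sqrt t + γ * Real.sqrt (D * t) with hxdef
    have hst : 0 < Real.sqrt t := Real.sqrt_pos.2 ht
    have hsDt : 0 ≤ Real.sqrt (D * t) := Real.sqrt_nonneg _
    have hx0 : 0 ≤ x := by positivity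
    have hx2 : γ ^ 2 * (D * t) ≤ x ^ 2 := by
      have h1 : (γ * Real.sqrt (D * t))^2 = γ^2 * (D * t) := by
        rw [mul_pow, Real.sq_sqrt (by positivity)]
      have h2 : 0 ≤ ε / Real.sqrt t := by positivity
      rw [hxdef, add_sq, h1]
      nlinarith [mul_nonneg h2 (mul_nonneg hγ.le hsDt), sq_nonneg (ε / Real.sqrt t)]
    calc Real.exp ((γ ^ 2 * D - k) * t) * erfc x
        ≤ Real.exp ((γ ^ 2 * D - k) * t) * Real.exp (-x^2) :=
          mul_le_mul_of_nonneg_left (erfc_le_exp hx0) (Real.exp_pos _).le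
      _ = Real.exp ((γ ^ 2 * D - k) * t - x^2) := by rw [← Real.exp_add]; ring_nf
      _ ≤ Real.exp (-(k * t)) := Real.exp_le_exp.2 (by nlinarith)
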